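/- arXiv:1111.3705 — 3 statements merged into one kernel-verified Lean document; each statement's English description precedes it below -/
import Mathlib

section
/- Let ρ: G → GL_d(ℂ) be a representation, and for m ≥ 0 let e_m: G → ℂ be the class function assigning to g the coefficient of q^m in the polynomial det(1 + q·ρ(g)) (the character of the m-th exterior power of ρ). Let A(q) be the (n+1)×(n+1) matrix over ℂ[q] with entries A(q)^i_j = Σ_{m=0}^d q^m · ⟨e_m·χ_i, χ_j⟩. Then for any 1 ≤ k ≤ n+1 and strictly increasing tuples 0 ≤ i_1 < … < i_k ≤ n, 0 ≤ j_1 < … < j_k ≤ n, the corresponding k×k minor of A(q) equals, as a polynomial in q, (1/|G|^k) · Σ_{0 ≤ p_1 < … < p_k ≤ n} det(χ_{i_a}(g_{p_b})) · conj( det(χ_{j_a}(g_{p_b})) ) · Π_{m=1}^k |C_{p_m}|·det(1 + q·ρ(g_{p_m})). -/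
/-!
Expanding the inner products and collecting powers of `q`, the entry `A i j` is
`(1/|G|) Σ_{s ∈ G} χ_i(s) conj(χ_j(s)) det(1 + q ρ(s))`. The summand is a class function, so
the sum runs over the representatives `g_p` with weights `|C_p|`, i.e. `A = T W Tᴴ` with `T` the
character table and `W` diagonal with entries `|C_p| det(1 + q ρ(g_p)) / |G|`. The Cauchy–Binet
formula for the minor of `A` is the claimed identity.
-/

open CategoryTheory Polynomial
open scoped Classical

/-- Inner product of class functions: `⟨a, b⟩ = (1/|G|) Σ_{g∈G} a(g)·conj(b(g))`. -/
noncomputable def cgIP {G : Type*} [Group G] [Fintype G] (a b : G → ℂ) : ℂ :=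
  (Fintype.card G : ℂ)⁻¹ * ∑ x : G, a x * (starRingEnd ℂ) (b x)

/-- The size of the conjugacy class of `x`. -/
noncomputable def classCard {G : Type*} [Group G] (x : G) : ℕ :=
  Nat.card {y : G // IsConj x y}

open Finset Matrix Equiv

theorem Tuple.sort_comp_perm_of_strictMono {α : Type*} [LinearOrder α] {k : ℕ}
    {f : Fin k → α} (hf : StrictMono f) (σ : Perm (Fin k)) :
    Tuple.sort (f ∘ σ) = σ⁻¹ := by
  refine (Tuple.eq_sort_iff.2 ⟨?_, fun i j hlt hij => ?_⟩).symm
  · simpa [Function.comp_def] using hf.monotone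
  · exact absurd (hf.injective (by simpa using hij)) hlt.ne

namespace Matrix

variable {R : Type*} [CommRing R]

theorem det_mul_eq_sum_det_submatrix_mul_prod {ι : Type*} [Fintype ι] {k : ℕ}
    (L : Matrix (Fin k) ι R) (M : Matrix ι (Fin k) R) :
    (L * M).det = ∑ f : Fin k → ι, (L.submatrix id f).det * ∏ i, M (f i) i := by
  simp only [det_apply' (L * M), mul_apply, prod_univ_sum, prod_mul_distrib, mul_sum]
  rw [sum_comm]
  refine sum_congr rfl fun f _ => ?_
  rw [det_apply', sum_mul]
  refine sum_congr rfl fun σ _ => ?_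
  simp [mul_assoc]

theorem det_submatrix_id_eq_zero_of_not_injective {ι : Type*} {k : ℕ}
    (L : Matrix (Fin k) ι R) {f : Fin k → ι} (hf : ¬ Function.Injective f) :
    (L.submatrix id f).det = 0 := by
  obtain ⟨a, b, hab, hne⟩ : ∃ a b, f a = f b ∧ a ≠ b := by
    simpa [Function.Injective] using hf
  exact det_zero_of_column_eq hne fun i => by simp [hab]

/-- **Cauchy–Binet formula**. -/
theorem det_mul_eq_sum_strictMono {ι : Type*} [Fintype ι] [LinearOrder ι] {k : ℕ}
    (L : Matrix (Fin k) ι R) (M : Matrix ι (Fin k) R) :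
    (L * M).det = ∑ f ∈ univ.filter (StrictMono : (Fin k → ι) → Prop),
      (L.submatrix id f).det * (M.submatrix f id).det := by
  rw [det_mul_eq_sum_det_submatrix_mul_prod,
    ← sum_filter_add_sum_filter_not univ Function.Injective,
    sum_eq_zero (s := univ.filter fun f => ¬ Function.Injective f)
      fun f hf => by rw [det_submatrix_id_eq_zero_of_not_injective L (mem_filter.1 hf).2, zero_mul],
    add_zero]
  -- The injective tuples are exactly the `f ∘ σ` with `f` strictly monotone and `σ` a
  -- permutation.
  symm
  calc _ = ∑ p ∈ univ.filter (StrictMono : (Fin k → ι) → Prop) ×ˢ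
          (univ : Finset (Perm (Fin k))),
        (L.submatrix id (p.1 ∘ p.2)).det * ∏ i, M (p.1 (p.2 i)) i := by
        rw [sum_product]
        refine sum_congr rfl fun f _ => ?_
        rw [det_apply' (M.submatrix f id), mul_sum]
        refine sum_congr rfl fun σ _ => ?_
        dsimp only
        rw [show L.submatrix id (f ∘ σ) = (L.submatrix id f).submatrix id σ from rfl,
          det_permute']
        simp only [submatrix_apply, id]
        ring
    _ = _ := by
        refine sum_nbij' (fun p => p.1 ∘ p.2) (fun f => (f ∘ Tuple.sort f, (Tuple.sort f)⁻¹))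
          ?_ ?_ ?_ ?_ fun _ _ => rfl
        · simp only [mem_product, mem_filter, mem_univ, true_and, and_true]
          exact fun p hp => hp.injective.comp p.2.injective
        · simp only [mem_product, mem_filter, mem_univ, true_and, and_true]
          exact fun f hf => (Tuple.monotone_sort f).strictMono_of_injective
            (hf.comp (Tuple.sort f).injective)
        · simp only [mem_product, mem_filter, mem_univ, true_and, and_true]
          rintro ⟨f, σ⟩ hf
          simp [Tuple.sort_comp_perm_of_strictMono hf, Function.comp_assoc]
        · intro f _
          simp [Function.comp_assoc]

theorem det_submatrix_mul_diagonal_mul {m m' ι : Type*} [Fintype ι] [LinearOrder ι] {k : ℕ}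
    (L : Matrix m ι R) (w : ι → R) (M : Matrix ι m' R) (I : Fin k → m) (J : Fin k → m') :
    ((L * diagonal w * M).submatrix I J).det =
      ∑ P ∈ univ.filter (StrictMono : (Fin k → ι) → Prop),
        (L.submatrix I P).det * (M.submatrix P J).det * ∏ a, w (P a) := by
  have hsplit : (L * diagonal w * M).submatrix I J =
      L.submatrix I id * (diagonal w * M).submatrix id J := by
    ext a b
    simp only [submatrix_apply, mul_apply, id, sum_mul, mul_sum, mul_assoc]
    exact sum_comm
  rw [hsplit, det_mul_eq_sum_strictMono]
  refine sum_congr rfl fun P _ => ?_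
  have hdiag : ((diagonal w * M).submatrix id J).submatrix P id =
      diagonal (w ∘ P) * M.submatrix P J := by
    ext a b
    simp [diagonal_mul]
  rw [submatrix_submatrix, Function.comp_id, Function.id_comp, hdiag, det_mul, det_diagonal]
  simp only [Function.comp_apply]
  ring

variable {n : Type*} [Fintype n] [DecidableEq n]

theorem det_one_add_X_smul_map_C_eq_reverse_charpoly (M : Matrix n n R) :
    det (1 + (X : R[X]) • M.map C) = (-M).charpoly.reverse := by
  rw [reverse_charpoly, charpolyRev, Matrix.map_neg _ (map_neg C), smul_neg, sub_neg_eq_add]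

theorem det_one_add_X_smul_map_C_units_conj (U : (Matrix n n R)ˣ) (M : Matrix n n R) :
    det (1 + (X : R[X]) •
        ((U : Matrix n n R) * M * ((U⁻¹ : (Matrix n n R)ˣ) : Matrix n n R)).map C) =
      det (1 + (X : R[X]) • M.map C) := by
  rw [det_one_add_X_smul_map_C_eq_reverse_charpoly, det_one_add_X_smul_map_C_eq_reverse_charpoly,
    coe_units_inv, ← neg_mul, ← mul_neg, charpoly_units_conj]

theorem natDegree_det_one_add_X_smul_map_C_le (M : Matrix n n R) :
    (det (1 + (X : R[X]) • M.map C)).natDegree ≤ Fintype.card n := by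
  simpa [add_comm] using natDegree_det_X_add_C_le M 1

theorem det_one_add_X_smul_map_C_monoidHom_conj {G : Type*} [Group G]
    (ρ : G →* GL n R) (c s : G) :
    det (1 + (X : R[X]) • (ρ (c * s * c⁻¹) : Matrix n n R).map C) =
      det (1 + (X : R[X]) • (ρ s : Matrix n n R).map C) := by
  rw [map_mul, map_mul, map_inv, Units.val_mul, Units.val_mul]
  exact det_one_add_X_smul_map_C_units_conj (ρ c) (ρ s)

end Matrix

theorem sum_eq_sum_classCard_nsmul {G M ι : Type*} [Group G] [Fintype G] [AddCommMonoid M]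
    [Fintype ι] (g : ι → G) (hg : ∀ x : G, ∃! p, IsConj (g p) x) (F : G → M)
    (hF : ∀ x c, F (c * x * c⁻¹) = F x) :
    ∑ x, F x = ∑ p, classCard (g p) • F (g p) := by
  choose κ hκ hκ_unique using hg
  rw [← sum_fiberwise univ κ F]
  refine sum_congr rfl fun p _ => ?_
  have hfiber : univ.filter (fun x => κ x = p) = univ.filter (IsConj (g p)) := by
    ext x
    simp only [mem_filter, mem_univ, true_and]
    exact ⟨fun h => h ▸ hκ x, fun h => (hκ_unique x p h).symm⟩
  have hconst : ∀ x ∈ univ.filter (IsConj (g p)), F x = F (g p) := by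
    intro x hx
    obtain ⟨c, rfl⟩ := isConj_iff.1 (mem_filter.1 hx).2
    exact hF _ _
  rw [hfiber, sum_congr rfl hconst, sum_const, classCard, Nat.card_eq_fintype_card,
    Fintype.card_subtype]

theorem sum_range_C_cgIP_coeff_mul_X_pow {G : Type*} [Group G] [Fintype G] (D : G → ℂ[X])
    {N : ℕ} (hD : ∀ s, (D s).natDegree < N) (a b : G → ℂ) :
    ∑ m ∈ range N, C (cgIP (fun s => (D s).coeff m * a s) b) * X ^ m =
      C (Fintype.card G : ℂ)⁻¹ * ∑ s, C (a s * starRingEnd ℂ (b s)) * D s := by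
  simp only [cgIP, map_mul, map_sum, mul_sum, sum_mul]
  rw [sum_comm]
  refine sum_congr rfl fun s _ => ?_
  conv_rhs => rw [as_sum_range_C_mul_X_pow' (D s) (hD s), mul_sum, mul_sum]
  refine sum_congr rfl fun m _ => ?_
  ring

theorem sum_range_C_cgIP_coeff_mul_X_pow_eq_sum_classCard {G ι : Type*} [Group G]
    [Fintype G] [Fintype ι] (g : ι → G) (hg : ∀ x : G, ∃! p, IsConj (g p) x)
    (D : G → ℂ[X]) {N : ℕ}
    (hD_deg : ∀ s, (D s).natDegree < N) (hD_conj : ∀ s c, D (c * s * c⁻¹) = D s)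
    (a b : G → ℂ)
    (ha : ∀ s c, a (c * s * c⁻¹) = a s) (hb : ∀ s c, b (c * s * c⁻¹) = b s) :
    ∑ m ∈ range N, C (cgIP (fun s => (D s).coeff m * a s) b) * X ^ m =
      ∑ p, C (a (g p)) * (C (Fintype.card G : ℂ)⁻¹ * classCard (g p) * D (g p)) *
        C (starRingEnd ℂ (b (g p))) := by
  rw [sum_range_C_cgIP_coeff_mul_X_pow D hD_deg,
    sum_eq_sum_classCard_nsmul g hg _ fun s c => by rw [ha, hb, hD_conj], mul_sum]
  refine sum_congr rfl fun p _ => ?_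
  rw [nsmul_eq_mul, map_mul]
  ring

theorem stmt2_general {G : Type} [Group G] [Fintype G] {n : ℕ}
    (g : Fin (n + 1) → G)
    (hg : ∀ x : G, ∃! k : Fin (n + 1), IsConj (g k) x)
    (R : Fin (n + 1) → FDRep ℂ G)
    {d : ℕ} (ρ : G →* Matrix.GeneralLinearGroup (Fin d) ℂ)
    -- `e m s` : the character of the `m`-th exterior power of `ρ`,
    -- i.e. the coefficient of `q^m` in `det(1 + q·ρ(s))`
    (e : ℕ → G → ℂ)
    (he : ∀ m s, e m s = Polynomial.coeff
      (Matrix.det ((1 : Matrix (Fin d) (Fin d) ℂ[X]) +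
        (Polynomial.X : ℂ[X]) • ((ρ s : Matrix (Fin d) (Fin d) ℂ)).map Polynomial.C)) m)
    -- `A` : the graded Clebsch–Gordan matrix of the exterior algebra of `ρ`
    (A : Matrix (Fin (n + 1)) (Fin (n + 1)) ℂ[X])
    (hA : ∀ i j, A i j = ∑ m ∈ Finset.range (d + 1),
      Polynomial.C (cgIP (fun s => e m s * (R i).character s) ((R j).character)) *
        Polynomial.X ^ m)
    (k : ℕ)
    (I J : Fin k → Fin (n + 1)) :
    (A.submatrix I J).det =
      Polynomial.C ((Fintype.card G : ℂ)⁻¹ ^ k) *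
        ∑ P ∈ Finset.univ.filter (fun P : Fin k → Fin (n + 1) => StrictMono P),
          Polynomial.C (Matrix.of fun a b : Fin k => (R (I a)).character (g (P b))).det *
            Polynomial.C ((starRingEnd ℂ)
              (Matrix.of fun a b : Fin k => (R (J a)).character (g (P b))).det) *
            ∏ m : Fin k, ((classCard (g (P m)) : ℂ[X]) *
              Matrix.det ((1 : Matrix (Fin d) (Fin d) ℂ[X]) + (Polynomial.X : ℂ[X]) •
                ((ρ (g (P m)) : Matrix (Fin d) (Fin d) ℂ)).map Polynomial.C)) := by
  set D : G → ℂ[X] := fun s =>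
    det (1 + (X : ℂ[X]) • (ρ s : Matrix (Fin d) (Fin d) ℂ).map C)
  set T : Matrix (Fin (n + 1)) (Fin (n + 1)) ℂ := of fun i p => (R i).character (g p)
  have hA_factor : A = T.map C *
      diagonal (fun p => C (Fintype.card G : ℂ)⁻¹ * (classCard (g p) : ℂ[X]) * D (g p)) *
      Tᴴ.map C := by
    refine Matrix.ext fun i j => ?_
    rw [hA, mul_apply]
    simp only [he, mul_diagonal, map_apply, conjTranspose_apply, of_apply, ← starRingEnd_apply, T]
    exact sum_range_C_cgIP_coeff_mul_X_pow_eq_sum_classCard g hg D (N := d + 1)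
      (fun s => (natDegree_det_one_add_X_smul_map_C_le _).trans_lt (by simp))
      (fun s c => det_one_add_X_smul_map_C_monoidHom_conj ρ c s) _ _
      (fun s c => FDRep.char_conj _ s c) (fun s c => FDRep.char_conj _ s c)
  rw [hA_factor, det_submatrix_mul_diagonal_mul, mul_sum]
  refine sum_congr rfl fun P _ => ?_
  have hdet_map (M : Matrix (Fin k) (Fin k) ℂ) : (M.map C).det = C M.det := (C.map_det M).symm
  have hT (I' : Fin k → Fin (n + 1)) :
      T.submatrix I' P = of fun a b => (R (I' a)).character (g (P b)) := rfl
  rw [submatrix_map, submatrix_map, hdet_map, hdet_map, ← conjTranspose_submatrix,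
    det_conjTranspose, ← starRingEnd_apply, hT, hT]
  simp only [prod_mul_distrib, prod_const, card_univ, Fintype.card_fin, map_pow, D]
  ring

theorem stmt2 {G : Type} [Group G] [Fintype G] {n : ℕ}
    (g : Fin (n + 1) → G) (hg1 : g 0 = 1)
    (hg : ∀ x : G, ∃! k : Fin (n + 1), IsConj (g k) x)
    (R : Fin (n + 1) → FDRep ℂ G)
    (hsimple : ∀ i, Simple (R i))
    (htriv : ∀ x : G, (R 0).character x = 1)
    (hdist : ∀ i j, i ≠ j → ¬ Nonempty (R i ≅ R j))
    {d : ℕ} (ρ : G →* Matrix.GeneralLinearGroup (Fin d) ℂ)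
    -- `e m s` : the character of the `m`-th exterior power of `ρ`,
    -- i.e. the coefficient of `q^m` in `det(1 + q·ρ(s))`
    (e : ℕ → G → ℂ)
    (he : ∀ m s, e m s = Polynomial.coeff
      (Matrix.det ((1 : Matrix (Fin d) (Fin d) ℂ[X]) +
        (Polynomial.X : ℂ[X]) • ((ρ s : Matrix (Fin d) (Fin d) ℂ)).map Polynomial.C)) m)
    -- `A` : the graded Clebsch–Gordan matrix of the exterior algebra of `ρ`
    (A : Matrix (Fin (n + 1)) (Fin (n + 1)) ℂ[X])
    (hA : ∀ i j, A i j = ∑ m ∈ Finset.range (d + 1),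
      Polynomial.C (cgIP (fun s => e m s * (R i).character s) ((R j).character)) *
        Polynomial.X ^ m)
    (k : ℕ) (hk1 : 1 ≤ k) (hk2 : k ≤ n + 1)
    (I J : Fin k → Fin (n + 1)) (hI : StrictMono I) (hJ : StrictMono J) :
    (A.submatrix I J).det =
      Polynomial.C ((Fintype.card G : ℂ)⁻¹ ^ k) *
        ∑ P ∈ Finset.univ.filter (fun P : Fin k → Fin (n + 1) => StrictMono P),
          Polynomial.C (Matrix.of fun a b : Fin k => (R (I a)).character (g (P b))).det *
            Polynomial.C ((starRingEnd ℂ)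
              (Matrix.of fun a b : Fin k => (R (J a)).character (g (P b))).det) *
            ∏ m : Fin k, ((classCard (g (P m)) : ℂ[X]) *
              Matrix.det ((1 : Matrix (Fin d) (Fin d) ℂ[X]) + (Polynomial.X : ℂ[X]) •
                ((ρ (g (P m)) : Matrix (Fin d) (Fin d) ℂ)).map Polynomial.C)) :=
  stmt2_general g hg R ρ e he A hA k I J
end

section
/- Let ρ: G → GL_d(ℂ) be a representation, and for m ≥ 0 let h_m: G → ℂ be the class function assigning to g the coefficient of q^m in the formal power series (det(1 − q·ρ(g)))^{-1} ∈ ℂ[[q]] (the character of the m-th symmetric power of ρ). Let S(q) be the (n+1)×(n+1) matrix over ℂ[[q]] with entries S(q)^i_j = Σ_{m≥0} q^m · ⟨h_m·χ_i, χ_j⟩. Then for any 1 ≤ k ≤ n+1 and strictly increasing tuples 0 ≤ i_1 < … < i_k ≤ n, 0 ≤ j_1 < … < j_k ≤ n, the corresponding k×k minor of S(q) equals, in ℂ[[q]], (1/|G|^k) · Σ_{0 ≤ p_1 < … < p_k ≤ n} det(χ_{i_a}(g_{p_b})) · conj( det(χ_{j_a}(g_{p_b})) ) · Π_{m=1}^k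 |C_{p_m}|·(det(1 − q·ρ(g_{p_m})))^{-1}. -/
open CategoryTheory
open scoped Classical

/-- `det(1 − q·ρ(g))` as an element of `ℂ[[q]]`. -/
noncomputable def molienDet {G : Type} [Group G] {d : ℕ}
    (ρ : G →* Matrix.GeneralLinearGroup (Fin d) ℂ) (s : G) : PowerSeries ℂ :=
  Matrix.det ((1 : Matrix (Fin d) (Fin d) (PowerSeries ℂ)) -
    (PowerSeries.X : PowerSeries ℂ) •
      ((ρ s : Matrix (Fin d) (Fin d) ℂ)).map (PowerSeries.C))

/-
The class-function inner product is a sum over `G`; since the characters and `det(1 - q ρ)⁻¹`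
are class functions, it collapses to a sum over conjugacy classes. Hence `S = T D Tᴴ`, where `T`
is the character table `χ_i(g_p)` and `D` is diagonal with entries
`|C_p| det(1 - q ρ(g_p))⁻¹ / |G|`. The minor formula is the Cauchy–Binet formula for this
product, proved by expanding the determinant multilinearly in the rows and sorting the
injective row selections.
-/

open Finset Equiv Matrix

theorem Finset.sum_filter_injective_eq_sum_strictMono_perm {k : ℕ} {ι M : Type*} [Fintype ι]
    [LinearOrder ι] [AddCommMonoid M] (f : (Fin k → ι) → M) :
    ∑ p ∈ univ.filter (fun p : Fin k → ι => Function.Injective p), f p =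
      ∑ P ∈ univ.filter (fun P : Fin k → ι => StrictMono P),
        ∑ τ : Perm (Fin k), f (P ∘ τ) := by
  rw [← sum_product']
  symm
  refine sum_nbij' (fun q => q.1 ∘ q.2) (fun p => (p ∘ Tuple.sort p, (Tuple.sort p)⁻¹))
    ?_ ?_ ?_ ?_ (fun _ _ => rfl)
  · rintro ⟨P, τ⟩ hq
    simp only [mem_product, mem_filter, mem_univ, true_and, and_true] at hq ⊢
    exact hq.injective.comp τ.injective
  · intro p hp
    simp only [mem_product, mem_filter, mem_univ, true_and, and_true] at hp ⊢
    exact (Tuple.monotone_sort p).strictMono_of_injective (hp.comp (Tuple.sort p).injective)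
  · rintro ⟨P, τ⟩ hq
    simp only [mem_product, mem_filter, mem_univ, true_and, and_true] at hq
    have hsort : τ⁻¹ = Tuple.sort (P ∘ τ) := by
      refine Tuple.eq_sort_iff.2 ⟨?_, fun i j hij hij' => ?_⟩
      · simpa [Function.comp_def] using hq.monotone
      · exact absurd (hq.injective (by simpa using hij')) hij.ne
    simp [← hsort, Function.comp_assoc]
  · intro p _
    simp [Function.comp_assoc]

theorem Matrix.det_mul_eq_sum_strictMono_s3 {k : ℕ} {ι R : Type*} [Fintype ι] [LinearOrder ι]
    [CommRing R] (A : Matrix (Fin k) ι R) (B : Matrix ι (Fin k) R) :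
    (A * B).det = ∑ P ∈ univ.filter (fun P : Fin k → ι => StrictMono P),
      (A.submatrix id P).det * (B.submatrix P id).det := by
  have hrows : (A * B) = fun i => ∑ p, A i p • B p := by
    ext i j
    simp [mul_apply, Finset.sum_apply]
  have hexpand :
      (A * B).det = ∑ p : Fin k → ι, (∏ i, A i (p i)) * (B.submatrix p id).det := by
    rw [hrows]
    exact (detRowAlternating.toMultilinearMap.map_sum _).trans
      (sum_congr rfl fun p _ => AlternatingMap.map_smul_univ _ _ _)
  rw [hexpand, ← sum_filter_of_ne (p := fun p : Fin k → ι => Function.Injective p)]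
  · rw [sum_filter_injective_eq_sum_strictMono_perm]
    refine sum_congr rfl fun P _ => ?_
    have hperm : ∀ τ : Perm (Fin k),
        (B.submatrix (P ∘ τ) id).det = Perm.sign τ * (B.submatrix P id).det :=
      fun τ => det_permute τ (B.submatrix P id)
    simp_rw [hperm, ← mul_assoc, ← sum_mul]
    congr 1
    rw [← det_transpose, det_apply']
    refine sum_congr rfl fun τ _ => ?_
    simp [mul_comm]
  · intro p _ hp
    contrapose! hp
    obtain ⟨i, j, hij, hne⟩ : ∃ i j, p i = p j ∧ i ≠ j := by
      simpa [Function.Injective] using hp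
    rw [det_zero_of_row_eq hne (funext fun c => by simp [hij]), mul_zero]

theorem Matrix.det_submatrix_mul_diagonal_mul_s3 {k : ℕ} {κ ι κ' R : Type*} [Fintype ι]
    [LinearOrder ι] [DecidableEq ι] [CommRing R] (X : Matrix κ ι R) (w : ι → R)
    (Y : Matrix ι κ' R) (I : Fin k → κ) (J : Fin k → κ') :
    ((X * diagonal w * Y).submatrix I J).det =
      ∑ P ∈ univ.filter (fun P : Fin k → ι => StrictMono P),
        (X.submatrix I P).det * (∏ m, w (P m)) * (Y.submatrix P J).det := by
  have hsplit : (X * diagonal w * Y).submatrix I J =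
      X.submatrix I id * diagonal w * Y.submatrix id J := by
    ext a b
    simp [mul_apply]
  rw [hsplit, det_mul_eq_sum_strictMono_s3]
  refine sum_congr rfl fun P _ => ?_
  have hcols : (X.submatrix I id * diagonal w).submatrix id P =
      X.submatrix I P * diagonal (w ∘ P) := by
    ext a b
    simp [mul_diagonal]
  rw [hcols, det_mul, det_diagonal, submatrix_submatrix]
  rfl

theorem sum_eq_sum_classCard_smul {G ι M : Type*} [Group G] [Fintype G] [Fintype ι]
    [AddCommMonoid M]
    (g : ι → G) (hg : ∀ x : G, ∃! k, IsConj (g k) x)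
    (f : G → M) (hf : ∀ a b, IsConj a b → f a = f b) :
    ∑ x, f x = ∑ p, classCard (g p) • f (g p) := by
  calc ∑ x, f x = ∑ x, ∑ p, if IsConj (g p) x then f x else 0 := by
        refine sum_congr rfl fun x _ => ?_
        obtain ⟨k, hk, huniq⟩ := hg x
        rw [sum_eq_single k (fun p _ hp => if_neg fun h => hp (huniq p h)) (by simp), if_pos hk]
    _ = ∑ p, ∑ x, if IsConj (g p) x then f (g p) else 0 := by
        rw [sum_comm]
        refine sum_congr rfl fun p _ => sum_congr rfl fun x _ => ?_
        split_ifs with h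
        · exact (hf _ _ h).symm
        · rfl
    _ = ∑ p, classCard (g p) • f (g p) := by
        simp [sum_ite, classCard, Nat.card_eq_fintype_card, Fintype.card_subtype]

theorem molienDet_eq_of_isConj {G : Type} [Group G] {d : ℕ}
    (ρ : G →* Matrix.GeneralLinearGroup (Fin d) ℂ) {a b : G} (hab : IsConj a b) :
    molienDet ρ a = molienDet ρ b := by
  obtain ⟨c, rfl⟩ := isConj_iff.1 hab
  let U : (Matrix (Fin d) (Fin d) (PowerSeries ℂ))ˣ :=
    Units.map (PowerSeries.C.mapMatrix : Matrix (Fin d) (Fin d) ℂ →+* _).toMonoidHom (ρ c)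
  have hU : ((ρ (c * a * c⁻¹) : Matrix (Fin d) (Fin d) ℂ)).map PowerSeries.C =
      U * ((ρ a : Matrix (Fin d) (Fin d) ℂ)).map PowerSeries.C *
        (U⁻¹ : (Matrix (Fin d) (Fin d) (PowerSeries ℂ))ˣ) := by
    simp [U, Matrix.map_mul, Units.coe_map_inv]
  unfold molienDet
  rw [hU, ← det_units_conj U]
  congr 1
  rw [mul_sub, sub_mul, mul_one, Units.mul_inv, mul_smul_comm, smul_mul_assoc]

theorem mk_cgIP_molienDet_eq_sum {G : Type} [Group G] [Fintype G] {d : ℕ}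
    (ρ : G →* Matrix.GeneralLinearGroup (Fin d) ℂ) (χ ψ : G → ℂ) :
    PowerSeries.mk (fun m => cgIP (fun s => PowerSeries.coeff m (molienDet ρ s)⁻¹ * χ s) ψ) =
      ∑ x, PowerSeries.C ((Fintype.card G : ℂ)⁻¹ * (χ x * starRingEnd ℂ (ψ x))) *
        (molienDet ρ x)⁻¹ := by
  ext m
  simp only [PowerSeries.coeff_mk, cgIP, map_sum, PowerSeries.coeff_C_mul, mul_sum]
  refine sum_congr rfl fun x _ => ?_
  ring

theorem stmt3_general {G : Type} [Group G] [Fintype G] {n : ℕ}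
    (g : Fin (n + 1) → G)
    (hg : ∀ x : G, ∃! k : Fin (n + 1), IsConj (g k) x)
    (R : Fin (n + 1) → FDRep ℂ G)
    {d : ℕ} (ρ : G →* Matrix.GeneralLinearGroup (Fin d) ℂ)
    -- `h m s` : the character of the `m`-th symmetric power of `ρ`,
    -- i.e. the coefficient of `q^m` in `det(1 − q·ρ(s))⁻¹ ∈ ℂ[[q]]`
    (h : ℕ → G → ℂ)
    (hh : ∀ m s, h m s = PowerSeries.coeff m (molienDet ρ s)⁻¹)
    -- `S` : the graded Clebsch–Gordan matrix of the symmetric algebra of `ρ`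
    (S : Matrix (Fin (n + 1)) (Fin (n + 1)) (PowerSeries ℂ))
    (hS : ∀ i j, S i j =
      PowerSeries.mk fun m => cgIP (fun s => h m s * (R i).character s) ((R j).character))
    (k : ℕ)
    (I J : Fin k → Fin (n + 1)) :
    (S.submatrix I J).det =
      PowerSeries.C ((Fintype.card G : ℂ)⁻¹ ^ k) *
        ∑ P ∈ Finset.univ.filter (fun P : Fin k → Fin (n + 1) => StrictMono P),
          PowerSeries.C (Matrix.of fun a b : Fin k => (R (I a)).character (g (P b))).det *
            PowerSeries.C ((starRingEnd ℂ)
              (Matrix.of fun a b : Fin k => (R (J a)).character (g (P b))).det) *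
            ∏ m : Fin k, ((classCard (g (P m)) : PowerSeries ℂ) *
              (molienDet ρ (g (P m)))⁻¹) := by
  obtain rfl : h = fun m s => PowerSeries.coeff m (molienDet ρ s)⁻¹ := funext₂ hh
  set T : Matrix (Fin (n + 1)) (Fin (n + 1)) ℂ := of fun i p => (R i).character (g p)
  have hS' : S = T.map PowerSeries.C *
      diagonal (fun p => PowerSeries.C (Fintype.card G : ℂ)⁻¹ *
        ((classCard (g p) : PowerSeries ℂ) * (molienDet ρ (g p))⁻¹)) *
      Tᴴ.map PowerSeries.C := by
    refine Matrix.ext fun i j => ?_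
    rw [hS, mk_cgIP_molienDet_eq_sum, sum_eq_sum_classCard_smul g hg]
    · refine sum_congr rfl fun p _ => ?_
      simp only [mul_diagonal, T, map_apply, conjTranspose_apply, of_apply, nsmul_eq_mul,
        map_mul, Complex.star_def]
      ring
    · intro a b hab
      rw [molienDet_eq_of_isConj ρ hab]
      obtain ⟨c, rfl⟩ := isConj_iff.1 hab
      rw [FDRep.char_conj, FDRep.char_conj]
  rw [hS', det_submatrix_mul_diagonal_mul_s3, mul_sum]
  refine sum_congr rfl fun P _ => ?_
  have hdetI : ((T.map PowerSeries.C).submatrix I P).det =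
      PowerSeries.C (of fun a b : Fin k => (R (I a)).character (g (P b))).det :=
    (RingHom.map_det (PowerSeries.C : ℂ →+* PowerSeries ℂ) (T.submatrix I P)).symm
  have hdetJ : ((Tᴴ.map PowerSeries.C).submatrix P J).det =
      PowerSeries.C
        ((starRingEnd ℂ) (of fun a b : Fin k => (R (J a)).character (g (P b))).det) := by
    rw [← Complex.star_def, ← det_conjTranspose]
    exact (RingHom.map_det (PowerSeries.C : ℂ →+* PowerSeries ℂ) _).symm
  rw [hdetI, hdetJ, prod_mul_distrib, prod_const, card_univ, Fintype.card_fin, ← map_pow]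
  ring

theorem stmt3 {G : Type} [Group G] [Fintype G] {n : ℕ}
    (g : Fin (n + 1) → G) (hg1 : g 0 = 1)
    (hg : ∀ x : G, ∃! k : Fin (n + 1), IsConj (g k) x)
    (R : Fin (n + 1) → FDRep ℂ G)
    (hsimple : ∀ i, Simple (R i))
    (htriv : ∀ x : G, (R 0).character x = 1)
    (hdist : ∀ i j, i ≠ j → ¬ Nonempty (R i ≅ R j))
    {d : ℕ} (ρ : G →* Matrix.GeneralLinearGroup (Fin d) ℂ)
    -- `h m s` : the character of the `m`-th symmetric power of `ρ`,
    -- i.e. the coefficient of `q^m` in `det(1 − q·ρ(s))⁻¹ ∈ ℂ[[q]]`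
    (h : ℕ → G → ℂ)
    (hh : ∀ m s, h m s = PowerSeries.coeff m (molienDet ρ s)⁻¹)
    -- `S` : the graded Clebsch–Gordan matrix of the symmetric algebra of `ρ`
    (S : Matrix (Fin (n + 1)) (Fin (n + 1)) (PowerSeries ℂ))
    (hS : ∀ i j, S i j =
      PowerSeries.mk fun m => cgIP (fun s => h m s * (R i).character s) ((R j).character))
    (k : ℕ) (hk1 : 1 ≤ k) (hk2 : k ≤ n + 1)
    (I J : Fin k → Fin (n + 1)) (hI : StrictMono I) (hJ : StrictMono J) :
    (S.submatrix I J).det =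
      PowerSeries.C ((Fintype.card G : ℂ)⁻¹ ^ k) *
        ∑ P ∈ Finset.univ.filter (fun P : Fin k → Fin (n + 1) => StrictMono P),
          PowerSeries.C (Matrix.of fun a b : Fin k => (R (I a)).character (g (P b))).det *
            PowerSeries.C ((starRingEnd ℂ)
              (Matrix.of fun a b : Fin k => (R (J a)).character (g (P b))).det) *
            ∏ m : Fin k, ((classCard (g (P m)) : PowerSeries ℂ) *
              (molienDet ρ (g (P m)))⁻¹) :=
  stmt3_general g hg R ρ h hh S hS k I J
end

section
/- Assume n ≥ 1 and let ρ: G → GL_d(ℂ) (d ≥ 1) be a representation whose image acts freely, i.e., det(1 − ρ(g)) ≠ 0 for every g ≠ 1 in G. Let C̃ be the Euclidean Cartan matrix of ρ: the n×n complex matrix with entries C̃^i_j = (1/|G|) Σ_{k=1}^n |C_k|·χ_i(g_k)·conj(χ_j(g_k))·det(1 − ρ(g_k)) for 1 ≤ i, j ≤ n. Then C̃ is invertible, and its inverse has entries (C̃^{-1})^i_j = (1/|G|) Σ_{k=1}^n |C_k|·(χ_i(g_k) − d_i)·( conj(χ_j(g_k)) − d_j ) / det(1 − ρ(g_k)). 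-/
/-!
Let `T i k = χ_i(g_k)` be the character table and `c k = |C_k|`. Row orthogonality reads
`T * diag c * Tᴴ = |G| • 1`, so also `diag c * Tᴴ * T = |G| • 1`. Delete the trivial row and
column to get `X`, and let `Y i k = χ_i(g_k) - d_i`. As the trivial character is the row of ones,
the two orthogonality relations descend to `diag c * Xᴴ * Y = |G| • 1` and
`X * diag c * Yᴴ = |G| • 1`. With `D k = det(1 - ρ(g_k))`, the product of
`C̃ = |G|⁻¹ X diag(c D) Xᴴ` and `|G|⁻¹ Y diag(c / D) Yᴴ` then collapses to
`|G|⁻² X diag(D) (|G| • 1) diag(c / D) Yᴴ = |G|⁻¹ X diag(c) Yᴴ = 1`.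
-/

open CategoryTheory
open scoped Classical

open Matrix
open scoped ComplexOrder

/-- The averaged Gram matrix `∑ h, (M h)ᴴ * M h` is positive definite and `M`-invariant, so it
conjugates `(M g)ᴴ` to `M g⁻¹`. -/
theorem Matrix.trace_map_inv_eq_star_trace {𝕜 G ι : Type*} [RCLike 𝕜] [Group G] [Fintype G]
    [Fintype ι] [DecidableEq ι] (M : G →* Matrix ι ι 𝕜) (g : G) :
    (M g⁻¹).trace = star (M g).trace := by
  set P : Matrix ι ι 𝕜 := ∑ h, (M h)ᴴ * M h
  have hP : P.PosDef := by
    simp only [P]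
    rw [← Finset.add_sum_erase _ _ (Finset.mem_univ (1 : G)), map_one, conjTranspose_one, one_mul]
    exact PosDef.one.add_posSemidef
      (posSemidef_sum _ fun h _ ↦ posSemidef_conjTranspose_mul_self (M h))
  have hinvariant : (M g)ᴴ * P * M g = P := by
    simp only [P, Finset.mul_sum, Finset.sum_mul]
    refine Fintype.sum_equiv (Equiv.mulRight g) _ _ fun h ↦ ?_
    simp only [Equiv.coe_mulRight, map_mul, conjTranspose_mul, Matrix.mul_assoc]
  have hconj : (M g)ᴴ = P * M g⁻¹ * P⁻¹ := by
    have hstep : (M g)ᴴ * P = P * M g⁻¹ := calc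
      (M g)ᴴ * P = (M g)ᴴ * P * (M g * M g⁻¹) := by
        rw [← map_mul, mul_inv_cancel, map_one, Matrix.mul_one]
      _ = P * M g⁻¹ := by rw [← Matrix.mul_assoc, hinvariant]
    rw [← hstep, mul_nonsing_inv_cancel_right _ _ ((isUnit_iff_isUnit_det P).mp hP.isUnit)]
  rw [← trace_conjTranspose, hconj, trace_conj hP.isUnit]

theorem FDRep.char_inv {𝕜 G : Type*} [RCLike 𝕜] [Group G] [Fintype G] (V : FDRep 𝕜 G) (g : G) :
    V.character g⁻¹ = star (V.character g) := by
  let b := Module.finBasis 𝕜 V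
  let M : G →* Matrix (Fin (Module.finrank 𝕜 V)) (Fin (Module.finrank 𝕜 V)) 𝕜 :=
    (LinearMap.toMatrixAlgEquiv b : (V →ₗ[𝕜] V) →* _).comp V.ρ
  have hM : ∀ x, V.character x = (M x).trace := fun x ↦ LinearMap.trace_eq_matrix_trace 𝕜 b _
  rw [hM, hM, trace_map_inv_eq_star_trace]

theorem classCard_eq_card_filter {G : Type*} [Group G] [Fintype G] (x : G) :
    classCard x = (Finset.univ.filter (IsConj x)).card := by
  rw [classCard, Nat.card_eq_fintype_card, Fintype.card_subtype]

theorem sum_classCard_mul_eq_sum {G ι R : Type*} [Group G] [Fintype G] [Fintype ι] [Semiring R]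
    (g : ι → G) (hg : ∀ x : G, ∃! k, IsConj (g k) x) (f : G → R)
    (hf : ∀ x y, IsConj x y → f x = f y) :
    ∑ k, (classCard (g k) : R) * f (g k) = ∑ x, f x := by
  choose φ hφ using fun x ↦ (hg x).exists
  have hfiber : ∀ k, Finset.univ.filter (fun x ↦ φ x = k) = Finset.univ.filter (IsConj (g k)) :=
    fun k ↦ Finset.filter_congr fun x _ ↦ ⟨fun h ↦ h ▸ hφ x, (hg x).unique (hφ x)⟩
  rw [← Finset.sum_fiberwise Finset.univ φ f]
  refine Finset.sum_congr rfl fun k _ ↦ ?_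
  rw [hfiber, Finset.sum_congr rfl fun x hx ↦ (hf _ _ (Finset.mem_filter.mp hx).2).symm,
    Finset.sum_const, classCard_eq_card_filter, nsmul_eq_mul]

theorem FDRep.sum_classCard_mul_char_mul_star_char {G ι : Type*} [Group G] [Fintype G] [Fintype ι]
    (g : ι → G) (hg : ∀ x : G, ∃! k, IsConj (g k) x) (V W : FDRep ℂ G) [Simple V] [Simple W] :
    ∑ k, (classCard (g k) : ℂ) * (V.character (g k) * star (W.character (g k))) =
      if Nonempty (V ≅ W) then (Fintype.card G : ℂ) else 0 := by
  have hcard : (Fintype.card G : ℂ) ≠ 0 := Nat.cast_ne_zero.mpr Fintype.card_ne_zero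
  have : Invertible (Nat.card G : ℂ) := invertibleOfNonzero (by rwa [Nat.card_eq_fintype_card])
  have horth := FDRep.char_orthonormal V W
  rw [Nat.card_eq_fintype_card, inv_mul_eq_iff_eq_mul₀ hcard] at horth
  rw [sum_classCard_mul_eq_sum g hg (fun x ↦ V.character x * star (W.character x))]
  · simp_rw [← FDRep.char_inv, horth]
    split_ifs <;> simp
  · intro x y hxy
    obtain ⟨c, rfl⟩ := isConj_iff.mp hxy
    rw [FDRep.char_conj, FDRep.char_conj]

noncomputable def charTable {G κ ι : Type*} [Group G] (R : κ → FDRep ℂ G) (g : ι → G) :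
    Matrix κ ι ℂ :=
  of fun i k ↦ (R i).character (g k)

theorem charTable_mul_diagonal_classCard_mul_conjTranspose {G κ ι : Type*} [Group G] [Fintype G]
    [Fintype ι] [DecidableEq ι] [DecidableEq κ] (R : κ → FDRep ℂ G) (hsimple : ∀ i, Simple (R i))
    (hdist : ∀ i j, i ≠ j → ¬ Nonempty (R i ≅ R j))
    (g : ι → G) (hg : ∀ x : G, ∃! k, IsConj (g k) x) :
    charTable R g * diagonal (fun k ↦ (classCard (g k) : ℂ)) * (charTable R g)ᴴ =
      (Fintype.card G : ℂ) • 1 := by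
  ext i j
  have := hsimple i
  have := hsimple j
  have hiso : Nonempty (R i ≅ R j) ↔ i = j :=
    ⟨fun h ↦ by_contra fun hne ↦ hdist i j hne h, by rintro rfl; exact ⟨Iso.refl _⟩⟩
  have horth := FDRep.sum_classCard_mul_char_mul_star_char g hg (R i) (R j)
  simp only [hiso] at horth
  rw [mul_apply, Matrix.smul_apply, one_apply, smul_eq_mul, mul_ite, mul_one, mul_zero, ← horth]
  refine Finset.sum_congr rfl fun k _ ↦ ?_
  simp only [charTable, mul_diagonal, conjTranspose_apply, of_apply]
  ring

namespace Matrix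

variable {𝕜 : Type*} [Field 𝕜]

theorem mul_eq_smul_one_comm {ι : Type*} [Fintype ι] [DecidableEq ι] {A B : Matrix ι ι 𝕜} {N : 𝕜}
    (hN : N ≠ 0) (h : A * B = N • 1) : B * A = N • 1 := by
  have hinv : A * (N⁻¹ • B) = 1 := by rw [mul_smul_comm, h, smul_smul, inv_mul_cancel₀ hN, one_smul]
  rw [← smul_inv_smul₀ hN (B * A), ← smul_mul_assoc, mul_eq_one_comm.mp hinv]

theorem inv_smul_mul_inv_smul_eq_one {ι : Type*} [Fintype ι] [DecidableEq ι]
    {X X' Y Y' : Matrix ι ι 𝕜} {c D : ι → 𝕜} {N : 𝕜} (hN : N ≠ 0) (hD : ∀ k, D k ≠ 0)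
    (hcol : diagonal c * X' * Y = N • 1) (hrow : X * diagonal c * Y' = N • 1) :
    (N⁻¹ • (X * diagonal (c * D) * X')) * (N⁻¹ • (Y * diagonal (c / D) * Y')) = 1 := by
  have hmiddle : diagonal (c * D) * X' * Y * diagonal (c / D) = N • diagonal c := by
    have hsplit : diagonal (c * D) = diagonal D * diagonal c := by
      simp [diagonal_mul_diagonal, mul_comm]
    calc diagonal (c * D) * X' * Y * diagonal (c / D)
        = diagonal D * (diagonal c * X' * Y) * diagonal (c / D) := by
          simp only [hsplit, Matrix.mul_assoc]
      _ = N • diagonal c := by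
          simp [hcol, diagonal_mul_diagonal, mul_div_cancel₀ _ (hD _)]
  calc (N⁻¹ • (X * diagonal (c * D) * X')) * (N⁻¹ • (Y * diagonal (c / D) * Y'))
      = N⁻¹ • N⁻¹ • (X * (diagonal (c * D) * X' * Y * diagonal (c / D)) * Y') := by
        simp only [Matrix.mul_assoc, smul_mul_assoc, mul_smul_comm]
    _ = 1 := by
        rw [hmiddle, Matrix.mul_smul, Matrix.smul_mul, hrow, smul_smul, smul_smul, smul_smul,
          inv_mul_cancel_right₀ hN, inv_mul_cancel₀ hN, one_smul]

section

variable [StarRing 𝕜] {n : ℕ} {T : Matrix (Fin (n + 1)) (Fin (n + 1)) 𝕜} {c : Fin (n + 1) → 𝕜}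
  {N : 𝕜}

theorem diagonal_mul_conjTranspose_submatrix_succ_mul_sub (hN : N ≠ 0)
    (hT : T * diagonal c * Tᴴ = N • 1) (hrow : ∀ k, T 0 k = 1) :
    diagonal (fun k ↦ c k.succ) * (T.submatrix Fin.succ Fin.succ)ᴴ *
      of (fun i k ↦ T i.succ k.succ - T i.succ 0) = N • 1 := by
  have hTcol : diagonal c * Tᴴ * T = N • 1 :=
    mul_eq_smul_one_comm hN (by rwa [← Matrix.mul_assoc])
  have hcol : ∀ a b, c a * ∑ l, star (T l a) * T l b = (N • (1 : Matrix _ _ 𝕜)) a b := by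
    intro a b
    rw [← hTcol, mul_apply, Finset.mul_sum]
    simp [diagonal_mul, mul_assoc]
  ext k m
  calc _ = c k.succ * ∑ l, star (T l k.succ) * (T l m.succ - T l 0) := by
        rw [mul_apply]
        simp [diagonal_mul, Fin.sum_univ_succ, hrow, Finset.mul_sum, mul_assoc]
    _ = c k.succ * ∑ l, star (T l k.succ) * T l m.succ -
          c k.succ * ∑ l, star (T l k.succ) * T l 0 := by
        simp only [mul_sub, Finset.sum_sub_distrib]
    _ = _ := by
        rw [hcol, hcol]
        simp [one_apply, Fin.succ_ne_zero]

theorem submatrix_succ_mul_diagonal_mul_conjTranspose_sub (hT : T * diagonal c * Tᴴ = N • 1)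
    (hrow : ∀ k, T 0 k = 1) :
    T.submatrix Fin.succ Fin.succ * diagonal (fun k ↦ c k.succ) *
      (of fun i k ↦ T i.succ k.succ - T i.succ 0)ᴴ = N • 1 := by
  have hrowsum : ∀ a b, ∑ k, T a k * c k * star (T b k) = (N • (1 : Matrix _ _ 𝕜)) a b := by
    intro a b
    rw [← hT, mul_apply]
    simp [mul_diagonal]
  ext i j
  calc _ = ∑ k, T i.succ k * c k * (star (T j.succ k) - star (T j.succ 0)) := by
        rw [mul_apply]
        simp [mul_diagonal, Fin.sum_univ_succ]
    _ = ∑ k, T i.succ k * c k * star (T j.succ k) -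
          star (T j.succ 0) * ∑ k, T i.succ k * c k * star (T 0 k) := by
        simp only [hrow, star_one, mul_one, mul_sub, Finset.sum_sub_distrib, Finset.mul_sum]
        congr 1
        exact Finset.sum_congr rfl fun k _ ↦ by ring
    _ = _ := by
        rw [hrowsum, hrowsum]
        simp [one_apply, Fin.succ_ne_zero]

end

end Matrix

theorem stmt12_general {G : Type} [Group G] [Fintype G] {n : ℕ}
    (g : Fin (n + 1) → G) (hg1 : g 0 = 1)
    (hg : ∀ x : G, ∃! k : Fin (n + 1), IsConj (g k) x)
    (R : Fin (n + 1) → FDRep ℂ G)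
    (hsimple : ∀ i, Simple (R i))
    (htriv : ∀ x : G, (R 0).character x = 1)
    (hdist : ∀ i j, i ≠ j → ¬ Nonempty (R i ≅ R j))
    {d : ℕ} (ρ : G →* Matrix.GeneralLinearGroup (Fin d) ℂ)
    -- the image of `ρ` acts freely
    (hfree : ∀ x : G, x ≠ 1 →
      Matrix.det ((1 : Matrix (Fin d) (Fin d) ℂ) - (ρ x : Matrix (Fin d) (Fin d) ℂ)) ≠ 0)
    -- `Ct` : the Euclidean Cartan matrix of `ρ`
    (Ct : Matrix (Fin n) (Fin n) ℂ)
    (hCt : ∀ i j : Fin n, Ct i j =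
      (Fintype.card G : ℂ)⁻¹ *
        ∑ k : Fin n, (classCard (g k.succ) : ℂ) *
          (R i.succ).character (g k.succ) *
          (starRingEnd ℂ) ((R j.succ).character (g k.succ)) *
          Matrix.det ((1 : Matrix (Fin d) (Fin d) ℂ) -
            (ρ (g k.succ) : Matrix (Fin d) (Fin d) ℂ)))
    -- `A` : the claimed inverse of `Ct`
    (A : Matrix (Fin n) (Fin n) ℂ)
    (hA : ∀ i j : Fin n, A i j =
      (Fintype.card G : ℂ)⁻¹ *
        ∑ k : Fin n, (classCard (g k.succ) : ℂ) *
          ((R i.succ).character (g k.succ) - (R i.succ).character 1) *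
          ((starRingEnd ℂ) ((R j.succ).character (g k.succ)) - (R j.succ).character 1) /
          Matrix.det ((1 : Matrix (Fin d) (Fin d) ℂ) -
            (ρ (g k.succ) : Matrix (Fin d) (Fin d) ℂ))) :
    Ct * A = 1 ∧ A * Ct = 1 := by
  set N : ℂ := (Fintype.card G : ℂ)
  set T := charTable R g
  set c : Fin (n + 1) → ℂ := fun k ↦ classCard (g k)
  set D : Fin n → ℂ := fun k ↦ det (1 - (ρ (g k.succ) : Matrix (Fin d) (Fin d) ℂ))
  have hN : N ≠ 0 := Nat.cast_ne_zero.mpr Fintype.card_ne_zero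
  have hT : T * diagonal c * Tᴴ = N • 1 :=
    charTable_mul_diagonal_classCard_mul_conjTranspose R hsimple hdist g hg
  have hrow : ∀ k, T 0 k = 1 := fun k ↦ htriv (g k)
  have hD : ∀ k, D k ≠ 0 := fun k ↦ hfree _ fun h ↦ k.succ_ne_zero <|
    (hg 1).unique (h ▸ IsConj.refl _) (hg1 ▸ IsConj.refl _)
  set X := T.submatrix Fin.succ Fin.succ
  set Y : Matrix (Fin n) (Fin n) ℂ := of fun i k ↦ T i.succ k.succ - T i.succ 0
  have hCt' : Ct = N⁻¹ • (X * diagonal ((fun k ↦ c k.succ) * D) * Xᴴ) := by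
    ext i j
    rw [hCt, Matrix.smul_apply, smul_eq_mul, mul_apply]
    refine congrArg _ (Finset.sum_congr rfl fun k _ ↦ ?_)
    simp only [mul_diagonal, submatrix_apply, conjTranspose_apply, Pi.mul_apply, charTable,
      of_apply, X, T, c, D, Complex.star_def]
    ring
  have hA' : A = N⁻¹ • (Y * diagonal ((fun k ↦ c k.succ) / D) * Yᴴ) := by
    ext i j
    rw [hA, Matrix.smul_apply, smul_eq_mul, mul_apply]
    refine congrArg _ (Finset.sum_congr rfl fun k _ ↦ ?_)
    simp only [mul_diagonal, conjTranspose_apply, Pi.div_apply, charTable, of_apply,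
      Y, T, c, D, Complex.star_def, map_sub, hg1, FDRep.char_one, map_natCast]
    ring
  have h := inv_smul_mul_inv_smul_eq_one hN hD
    (diagonal_mul_conjTranspose_submatrix_succ_mul_sub hN hT hrow)
    (submatrix_succ_mul_diagonal_mul_conjTranspose_sub hT hrow)
  rw [hCt', hA']
  exact ⟨h, mul_eq_one_comm.mp h⟩

theorem stmt12 {G : Type} [Group G] [Fintype G] {n : ℕ} (hn : 1 ≤ n)
    (g : Fin (n + 1) → G) (hg1 : g 0 = 1)
    (hg : ∀ x : G, ∃! k : Fin (n + 1), IsConj (g k) x)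
    (R : Fin (n + 1) → FDRep ℂ G)
    (hsimple : ∀ i, Simple (R i))
    (htriv : ∀ x : G, (R 0).character x = 1)
    (hdist : ∀ i j, i ≠ j → ¬ Nonempty (R i ≅ R j))
    {d : ℕ} (hd : 1 ≤ d) (ρ : G →* Matrix.GeneralLinearGroup (Fin d) ℂ)
    -- the image of `ρ` acts freely
    (hfree : ∀ x : G, x ≠ 1 →
      Matrix.det ((1 : Matrix (Fin d) (Fin d) ℂ) - (ρ x : Matrix (Fin d) (Fin d) ℂ)) ≠ 0)
    -- `Ct` : the Euclidean Cartan matrix of `ρ`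
    (Ct : Matrix (Fin n) (Fin n) ℂ)
    (hCt : ∀ i j : Fin n, Ct i j =
      (Fintype.card G : ℂ)⁻¹ *
        ∑ k : Fin n, (classCard (g k.succ) : ℂ) *
          (R i.succ).character (g k.succ) *
          (starRingEnd ℂ) ((R j.succ).character (g k.succ)) *
          Matrix.det ((1 : Matrix (Fin d) (Fin d) ℂ) -
            (ρ (g k.succ) : Matrix (Fin d) (Fin d) ℂ)))
    -- `A` : the claimed inverse of `Ct`
    (A : Matrix (Fin n) (Fin n) ℂ)
    (hA : ∀ i j : Fin n, A i j =
      (Fintype.card G : ℂ)⁻¹ *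
        ∑ k : Fin n, (classCard (g k.succ) : ℂ) *
          ((R i.succ).character (g k.succ) - (R i.succ).character 1) *
          ((starRingEnd ℂ) ((R j.succ).character (g k.succ)) - (R j.succ).character 1) /
          Matrix.det ((1 : Matrix (Fin d) (Fin d) ℂ) -
            (ρ (g k.succ) : Matrix (Fin d) (Fin d) ℂ))) :
    Ct * A = 1 ∧ A * Ct = 1 :=
  stmt12_general g hg1 hg R hsimple htriv hdist ρ hfree Ct hCt A hA
end
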